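/- arXiv:1805.12187 — 2 statements merged into one kernel-verified Lean document; each statement's English description precedes it below -/
import Mathlib

section
/- There exists a positive Borel measure ρ on [0,∞) of the form ρ = Z·δ_{m²} + σ with Z > 0 and σ a positive, polynomially bounded, absolutely continuous measure such that ρ([0,∞)) = ∞. (Hence infinite total spectral mass is compatible with a nonzero discrete mass-shell contribution Z > 0.) -/
open MeasureTheory Set ENNReal

/-- **Part a.) of Theorem 3 of the paper.**
For every mass-shell value `m² ≥ 0` there exists a positive Borel measure
`ρ = Z·δ_{m²} + σ` on `[0,∞)` with a nonzero finite discrete contribution `0 < Z < ∞`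
and `σ` positive, absolutely continuous, supported on `[0,∞)` and polynomially bounded,
such that the total spectral mass is infinite: `ρ([0,∞)) = ∞`.  Hence infinite spectral
mass is compatible with `Z > 0`. -/
theorem exists_infinite_spectral_mass_with_positive_Z (m2 : ℝ) (hm2 : 0 ≤ m2) :
    ∃ (ρ σ : Measure ℝ) (Z : ℝ≥0∞),
      0 < Z ∧ Z < ⊤ ∧
      ρ = Z • Measure.dirac m2 + σ ∧
      σ ≪ (volume : Measure ℝ) ∧
      σ (Iio 0) = 0 ∧
      (∃ (C : ℝ) (N : ℕ), 0 ≤ C ∧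
        ∀ L : ℝ, 0 ≤ L → σ (Icc 0 L) ≤ ENNReal.ofReal (C * (1 + L ^ N))) ∧
      ρ univ = ⊤ := by
  refine ⟨(1 : ℝ≥0∞) • Measure.dirac m2 + volume.restrict (Ici 0),
    volume.restrict (Ici 0), 1, one_pos, one_lt_top, rfl, ?_, ?_, ?_, ?_⟩
  · exact Measure.restrict_le_self.absolutelyContinuous
  · rw [Measure.restrict_apply measurableSet_Iio]
    have : Iio (0:ℝ) ∩ Ici 0 = ∅ := by rw [Set.Iio_inter_Ici, Set.Ico_self]
    simp [this]
  · refine ⟨1, 1, zero_le_one, fun L hL => ?_⟩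
    rw [Measure.restrict_apply measurableSet_Icc]
    have : Icc 0 L ∩ Ici 0 = Icc 0 L := inter_eq_left.2 fun x hx => hx.1
    rw [this, Real.volume_Icc]
    apply ENNReal.ofReal_le_ofReal
    simp only [pow_one, one_mul]
    linarith
  · simp [Measure.restrict_apply_univ, Real.volume_Ici]
end

section
/- Let ρ be a polynomially bounded positive measure on [0,∞) and define W₂(f ⊗ g) via the Källén–Lehmann representation W₂ = ∫₀^∞ dρ(m₀²) Δ₊^{m₀}. Then W₂ is a well-defined tempered distribution on S(ℝ⁴): for every f ∈ S(ℝ⁴), the map m₀² ↦ ∫_{ℝ³}(d³k/√(k²+m₀²)) f̂(√(k²+m₀²),k) is continuous and bounded by C_M (1+m₀²)^{-M} for every M, so the ρ-integral converges and defines a continuous linear functional on S(ℝ⁴). -/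
open MeasureTheory Filter Topology Set SchwartzMap

/-- The Fourier transform `f̂` of a Schwartz function on `ℝ⁴`. -/
noncomputable def fourierHat (f : 𝓢(EuclideanSpace ℝ (Fin 4), ℂ)) :
    𝓢(EuclideanSpace ℝ (Fin 4), ℂ) :=
  SchwartzMap.fourierTransformCLM ℝ f

/-- Assemble the 4-vector `(E, p)` from energy `E` and momentum `p ∈ ℝ³`. -/
noncomputable def fourVec (En : ℝ) (p : EuclideanSpace ℝ (Fin 3)) :
    EuclideanSpace ℝ (Fin 4) :=
  (EuclideanSpace.equiv (Fin 4) ℝ).symm (Fin.cons En (fun i => p i))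

/-- The momentum-space integral `∫ d³k f̂(√(k²+s),k)/√(k²+s)` of the free two-point
function `Δ₊^{m₀}` at squared mass `s = m₀²`. -/
noncomputable def deltaPlusPair (f : 𝓢(EuclideanSpace ℝ (Fin 4), ℂ)) (s : ℝ) : ℂ :=
  ∫ k : EuclideanSpace ℝ (Fin 3),
    fourierHat f (fourVec (Real.sqrt (‖k‖ ^ 2 + s)) k) /
      (Real.sqrt (‖k‖ ^ 2 + s) : ℂ)

/-! On the mass shell `ω = √(‖k‖² + s)` the 4-vector `(ω, k)` has norm `√(2‖k‖² + s)`, so the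
Schwartz decay of `f̂` bounds the integrand by `C_M (1 + s)⁻ᴹ ‖k‖⁻¹ (1 + ‖k‖)⁻⁴`, an integrable
function of `k ∈ ℝ³`. Dominated convergence gives continuity in `s`, and the decay bound with
`M = N + 2` beats the growth of `ρ`: on `[n, n + 1)` it leaves a summable `(n + 1)⁻²`.
Since `C_M` is a Schwartz seminorm of `f̂`, the resulting functional is continuous. -/

local notation "ℝ³" => EuclideanSpace ℝ (Fin 3)
local notation "ℝ⁴" => EuclideanSpace ℝ (Fin 4)

lemma norm_fourVec_sq (En : ℝ) (p : ℝ³) : ‖fourVec En p‖ ^ 2 = En ^ 2 + ‖p‖ ^ 2 := by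
  simp [EuclideanSpace.norm_sq_eq, Fin.sum_univ_succ, fourVec, Real.norm_eq_abs, sq_abs]

lemma continuous_fourVec : Continuous fun q : ℝ × ℝ³ => fourVec q.1 q.2 := by
  refine (EuclideanSpace.equiv (Fin 4) ℝ).symm.continuous.comp (continuous_pi fun i => ?_)
  refine Fin.cases ?_ (fun j => ?_) i
  · simpa using continuous_fst
  · simp only [Fin.cons_succ]
    fun_prop

noncomputable def shellWeight (k : ℝ³) : ℝ := ‖k‖⁻¹ * ((1 + ‖k‖) ^ 4)⁻¹

lemma integral_shellWeight_nonneg : 0 ≤ ∫ k, shellWeight k :=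
  integral_nonneg fun k => by unfold shellWeight; positivity

lemma integrable_shellWeight : Integrable shellWeight := by
  refine (integrable_fun_norm_addHaar volume (f := fun r : ℝ => r⁻¹ * ((1 + r) ^ 4)⁻¹)).2 ?_
  have hdecay : IntegrableOn (fun r : ℝ => (1 + ‖r‖) ^ (-3 : ℝ)) (Ioi 0) :=
    (integrable_one_add_norm (by norm_num)).integrableOn
  refine hdecay.mono' (by fun_prop) ?_
  rw [ae_restrict_iff' measurableSet_Ioi]
  refine Eventually.of_forall fun r (hr : 0 < r) => ?_
  rw [finrank_euclideanSpace_fin, Real.norm_of_nonneg hr.le, smul_eq_mul,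
    Real.rpow_neg (by positivity), show (3 : ℝ) = (3 : ℕ) by norm_num, Real.rpow_natCast,
    Real.norm_of_nonneg (by positivity)]
  calc r ^ (3 - 1) * (r⁻¹ * ((1 + r) ^ 4)⁻¹) = r / (1 + r) * ((1 + r) ^ 3)⁻¹ := by
        field_simp
    _ ≤ 1 * ((1 + r) ^ 3)⁻¹ := by
        gcongr; rw [div_le_one (by positivity)]; linarith
    _ = ((1 + r) ^ 3)⁻¹ := one_mul _

lemma SchwartzMap.norm_le_sup_seminorm_div {E F : Type*} [NormedAddCommGroup E]
    [NormedSpace ℝ E] [NormedAddCommGroup F] [NormedSpace ℝ F] (g : 𝓢(E, F)) (n : ℕ) (x : E) :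
    ‖g x‖ ≤
      2 ^ n * (Finset.Iic (n, 0)).sup (schwartzSeminormFamily ℝ E F) g / (1 + ‖x‖) ^ n := by
  rw [le_div_iff₀' (by positivity)]
  have h := one_add_le_sup_seminorm_apply (𝕜 := ℝ) (m := (n, 0)) le_rfl le_rfl g x
  rw [norm_iteratedFDeriv_zero] at h
  exact h

noncomputable def shellIntegrand (g : 𝓢(ℝ⁴, ℂ)) (s : ℝ) (k : ℝ³) : ℂ :=
  g (fourVec (Real.sqrt (‖k‖ ^ 2 + s)) k) / (Real.sqrt (‖k‖ ^ 2 + s) : ℂ)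

noncomputable def shellIntegral (g : 𝓢(ℝ⁴, ℂ)) (s : ℝ) : ℂ := ∫ k, shellIntegrand g s k

lemma deltaPlusPair_eq_shellIntegral (f : 𝓢(ℝ⁴, ℂ)) :
    deltaPlusPair f = shellIntegral (fourierHat f) := rfl

lemma one_add_pow_mul_one_add_pow_le (M : ℕ) {s : ℝ} (hs : 0 ≤ s) (k : ℝ³) :
    (1 + ‖k‖) ^ 4 * (1 + s) ^ M ≤
      (1 + ‖fourVec (Real.sqrt (‖k‖ ^ 2 + s)) k‖) ^ (4 + 2 * M) := by
  set x := fourVec (Real.sqrt (‖k‖ ^ 2 + s)) k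
  have hx : ‖x‖ ^ 2 = 2 * ‖k‖ ^ 2 + s := by
    rw [norm_fourVec_sq, Real.sq_sqrt (by positivity)]; ring
  have hkx : ‖k‖ ≤ ‖x‖ := (pow_le_pow_iff_left₀ (norm_nonneg _) (norm_nonneg _) two_ne_zero).1
    (by rw [hx]; linarith [sq_nonneg ‖k‖])
  have hsx : 1 + s ≤ (1 + ‖x‖) ^ 2 := by nlinarith [norm_nonneg x]
  rw [pow_add, pow_mul]
  gcongr

lemma norm_shellIntegrand_le (g : 𝓢(ℝ⁴, ℂ)) (M : ℕ) {s : ℝ} (hs : 0 ≤ s) {k : ℝ³}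
    (hk : k ≠ 0) :
    ‖shellIntegrand g s k‖ ≤
      2 ^ (4 + 2 * M) * (Finset.Iic (4 + 2 * M, 0)).sup (schwartzSeminormFamily ℝ ℝ⁴ ℂ) g /
        (1 + s) ^ M * shellWeight k := by
  set A := 2 ^ (4 + 2 * M) * (Finset.Iic (4 + 2 * M, 0)).sup (schwartzSeminormFamily ℝ ℝ⁴ ℂ) g
  set ω := Real.sqrt (‖k‖ ^ 2 + s)
  have hk0 : 0 < ‖k‖ := norm_pos_iff.2 hk
  have hkω : ‖k‖ ≤ ω := Real.le_sqrt_of_sq_le (by linarith)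
  calc ‖shellIntegrand g s k‖ = ‖g (fourVec ω k)‖ / ω := by
        rw [shellIntegrand, norm_div, Complex.norm_real,
          Real.norm_of_nonneg (Real.sqrt_nonneg _)]
    _ ≤ A / (1 + ‖fourVec ω k‖) ^ (4 + 2 * M) / ‖k‖ := by
        gcongr
        exact g.norm_le_sup_seminorm_div _ _
    _ ≤ A / ((1 + ‖k‖) ^ 4 * (1 + s) ^ M) / ‖k‖ := by
        gcongr
        exact one_add_pow_mul_one_add_pow_le M hs k
    _ = A / (1 + s) ^ M * shellWeight k := by
        rw [shellWeight]; field_simp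

lemma measurable_shellIntegrand (g : 𝓢(ℝ⁴, ℂ)) :
    Measurable (Function.uncurry (shellIntegrand g)) := by
  have hω : Continuous fun q : ℝ × ℝ³ => Real.sqrt (‖q.2‖ ^ 2 + q.1) := by fun_prop
  exact (g.continuous.comp (continuous_fourVec.comp (hω.prodMk continuous_snd))).measurable.div
    (Complex.continuous_ofReal.comp hω).measurable

lemma continuousOn_shellIntegrand (g : 𝓢(ℝ⁴, ℂ)) {k : ℝ³} (hk : k ≠ 0) :
    ContinuousOn (fun s => shellIntegrand g s k) (Ici 0) := by
  intro s (hs : 0 ≤ s)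
  have hk0 : 0 < ‖k‖ := norm_pos_iff.2 hk
  have hω : (Real.sqrt (‖k‖ ^ 2 + s) : ℂ) ≠ 0 :=
    Complex.ofReal_ne_zero.2 (Real.sqrt_pos.2 (by positivity)).ne'
  have hω' : Continuous fun s : ℝ => Real.sqrt (‖k‖ ^ 2 + s) := by fun_prop
  have hnum := g.continuous.comp (continuous_fourVec.comp (hω'.prodMk (continuous_const (y := k))))
  exact (hnum.continuousAt.div (Complex.continuous_ofReal.comp hω').continuousAt
    hω).continuousWithinAt

lemma integrable_shellIntegrand (g : 𝓢(ℝ⁴, ℂ)) {s : ℝ} (hs : 0 ≤ s) :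
    Integrable (shellIntegrand g s) :=
  (integrable_shellWeight.const_mul _).mono'
    ((measurable_shellIntegrand g).comp measurable_prodMk_left).aestronglyMeasurable
    ((Measure.ae_ne volume 0).mono fun _ hk => norm_shellIntegrand_le g 0 hs hk)

lemma norm_shellIntegral_le (g : 𝓢(ℝ⁴, ℂ)) (M : ℕ) {s : ℝ} (hs : 0 ≤ s) :
    ‖shellIntegral g s‖ ≤
      2 ^ (4 + 2 * M) * (Finset.Iic (4 + 2 * M, 0)).sup (schwartzSeminormFamily ℝ ℝ⁴ ℂ) g *
        (∫ k, shellWeight k) / (1 + s) ^ M := by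
  calc ‖shellIntegral g s‖
      ≤ ∫ k, 2 ^ (4 + 2 * M) *
          (Finset.Iic (4 + 2 * M, 0)).sup (schwartzSeminormFamily ℝ ℝ⁴ ℂ) g /
            (1 + s) ^ M * shellWeight k :=
        norm_integral_le_of_norm_le (integrable_shellWeight.const_mul _)
          ((Measure.ae_ne volume 0).mono fun _ hk => norm_shellIntegrand_le g M hs hk)
    _ = _ := by rw [integral_const_mul]; ring

lemma continuousOn_shellIntegral (g : 𝓢(ℝ⁴, ℂ)) : ContinuousOn (shellIntegral g) (Ici 0) :=
  continuousOn_of_dominated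
    (fun s _ => ((measurable_shellIntegrand g).comp measurable_prodMk_left).aestronglyMeasurable)
    (fun _ hs => (Measure.ae_ne volume 0).mono fun _ hk =>
      (norm_shellIntegrand_le g 0 hs hk).trans_eq (by rw [pow_zero, div_one]))
    (integrable_shellWeight.const_mul _)
    ((Measure.ae_ne volume 0).mono fun _ hk => continuousOn_shellIntegrand g hk)

section PolynomialGrowth

variable {ρ : Measure ℝ} {C : ℝ} {N : ℕ}

lemma measure_Ico_nat_le
    (hpoly : ∀ L : ℝ, 0 ≤ L → ρ (Icc 0 L) ≤ ENNReal.ofReal (C * (1 + L ^ N))) (n : ℕ) :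
    ρ (Ico (n : ℝ) (n + 1)) ≤ ENNReal.ofReal (C * (1 + ((n : ℝ) + 1) ^ N)) :=
  (measure_mono (Ico_subset_Icc_self.trans (Icc_subset_Icc_left n.cast_nonneg))).trans
    (hpoly _ (by positivity))

lemma setIntegral_Ico_nat_inv_one_add_pow_le (hC : 0 ≤ C)
    (hpoly : ∀ L : ℝ, 0 ≤ L → ρ (Icc 0 L) ≤ ENNReal.ofReal (C * (1 + L ^ N))) (n : ℕ) :
    ∫ s in Ico (n : ℝ) (n + 1), ‖((1 + s) ^ (N + 2))⁻¹‖ ∂ρ ≤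
      2 * C * (((n : ℝ) + 1) ^ 2)⁻¹ := by
  set b : ℝ := n + 1
  have hb : 1 ≤ b := by simp [b]
  have hbN : 1 ≤ b ^ N := one_le_pow₀ hb
  have hpiece := measure_Ico_nat_le hpoly n
  calc ∫ s in Ico (n : ℝ) (n + 1), ‖((1 + s) ^ (N + 2))⁻¹‖ ∂ρ
      ≤ (b ^ (N + 2))⁻¹ * ρ.real (Ico (n : ℝ) (n + 1)) := by
        refine (Real.le_norm_self _).trans (norm_setIntegral_le_of_norm_le_const
          (hpiece.trans_lt ENNReal.ofReal_lt_top) fun s hs => ?_)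
        have hs0 : 0 ≤ s := n.cast_nonneg.trans hs.1
        rw [norm_norm, norm_inv, norm_pow, Real.norm_of_nonneg (by positivity)]
        gcongr
        linarith [hs.1]
    _ ≤ (b ^ (N + 2))⁻¹ * (C * (1 + b ^ N)) := by
        gcongr
        exact ENNReal.toReal_le_of_le_ofReal (mul_nonneg hC (by linarith)) hpiece
    _ ≤ (b ^ (N + 2))⁻¹ * (C * (2 * b ^ N)) := by
        gcongr
        linarith
    _ = 2 * C * (b ^ 2)⁻¹ := by
        field_simp
        ring

lemma integrableOn_Ici_inv_one_add_pow (hC : 0 ≤ C)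
    (hpoly : ∀ L : ℝ, 0 ≤ L → ρ (Icc 0 L) ≤ ENNReal.ofReal (C * (1 + L ^ N))) :
    IntegrableOn (fun s : ℝ => ((1 + s) ^ (N + 2))⁻¹) (Ici 0) ρ := by
  have hcover : Ici (0 : ℝ) ⊆ ⋃ n : ℕ, Ico (n : ℝ) (n + 1) := fun s (hs : 0 ≤ s) =>
    mem_iUnion.2 ⟨⌊s⌋₊, Nat.floor_le hs, Nat.lt_floor_add_one s⟩
  have hsummable : Summable fun n : ℕ => 2 * C * (((n : ℝ) + 1) ^ 2)⁻¹ := by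
    simpa using
      ((summable_nat_add_iff 1).2 (Real.summable_nat_pow_inv.2 one_lt_two)).mul_left (2 * C)
  refine (integrableOn_iUnion_of_summable_integral_norm (fun n => ?_)
    (hsummable.of_nonneg_of_le (fun _ => integral_nonneg fun _ => norm_nonneg _)
      (setIntegral_Ico_nat_inv_one_add_pow_le hC hpoly))).mono_set hcover
  refine Measure.integrableOn_of_bounded ((measure_Ico_nat_le hpoly n).trans_lt
    ENNReal.ofReal_lt_top).ne (by fun_prop) (M := 1) ?_
  refine (ae_restrict_iff' measurableSet_Ico).2 (Eventually.of_forall fun s hs => ?_)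
  have hs0 : 0 ≤ s := n.cast_nonneg.trans hs.1
  rw [norm_inv, norm_pow, Real.norm_of_nonneg (by positivity)]
  exact inv_le_one_of_one_le₀ (one_le_pow₀ (by linarith))

end PolynomialGrowth

lemma shellIntegral_add (g h : 𝓢(ℝ⁴, ℂ)) {s : ℝ} (hs : 0 ≤ s) :
    shellIntegral (g + h) s = shellIntegral g s + shellIntegral h s := by
  rw [shellIntegral, shellIntegral, shellIntegral,
    ← integral_add (integrable_shellIntegrand g hs) (integrable_shellIntegrand h hs)]
  simp only [shellIntegrand, add_apply, add_div]

lemma shellIntegral_smul (a : ℝ) (g : 𝓢(ℝ⁴, ℂ)) (s : ℝ) :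
    shellIntegral (a • g) s = a • shellIntegral g s := by
  rw [shellIntegral, shellIntegral, ← integral_smul]
  simp only [shellIntegrand, smul_apply, smul_div_assoc]

section KallenLehmann

variable {ρ : Measure ℝ} {C : ℝ} {N : ℕ}

lemma integrableOn_shellIntegral (hC : 0 ≤ C)
    (hpoly : ∀ L : ℝ, 0 ≤ L → ρ (Icc 0 L) ≤ ENNReal.ofReal (C * (1 + L ^ N))) (g : 𝓢(ℝ⁴, ℂ)) :
    IntegrableOn (shellIntegral g) (Ici 0) ρ :=
  ((integrableOn_Ici_inv_one_add_pow hC hpoly).const_mul _).mono'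
    ((continuousOn_shellIntegral g).aestronglyMeasurable measurableSet_Ici)
    ((ae_restrict_iff' measurableSet_Ici).2 (Eventually.of_forall fun _ hs =>
      (norm_shellIntegral_le g (N + 2) hs).trans_eq (div_eq_mul_inv _ _)))

lemma exists_bound_setIntegral_shellIntegral (hC : 0 ≤ C)
    (hpoly : ∀ L : ℝ, 0 ≤ L → ρ (Icc 0 L) ≤ ENNReal.ofReal (C * (1 + L ^ N))) :
    ∃ c : ℝ, 0 ≤ c ∧ ∀ g : 𝓢(ℝ⁴, ℂ), ‖∫ s in Ici 0, shellIntegral g s ∂ρ‖ ≤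
      c * (Finset.Iic (4 + 2 * (N + 2), 0)).sup (schwartzSeminormFamily ℝ ℝ⁴ ℂ) g := by
  set I := ∫ s in Ici 0, ((1 + s) ^ (N + 2))⁻¹ ∂ρ
  have hI : 0 ≤ I := setIntegral_nonneg measurableSet_Ici fun s (hs : 0 ≤ s) => by positivity
  refine ⟨2 ^ (4 + 2 * (N + 2)) * (∫ k, shellWeight k) * I,
    by have := integral_shellWeight_nonneg; positivity, fun g => ?_⟩
  calc ‖∫ s in Ici 0, shellIntegral g s ∂ρ‖
      ≤ ∫ s in Ici 0, 2 ^ (4 + 2 * (N + 2)) *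
          (Finset.Iic (4 + 2 * (N + 2), 0)).sup (schwartzSeminormFamily ℝ ℝ⁴ ℂ) g *
          (∫ k, shellWeight k) * ((1 + s) ^ (N + 2))⁻¹ ∂ρ :=
        norm_integral_le_of_norm_le ((integrableOn_Ici_inv_one_add_pow hC hpoly).const_mul _)
          ((ae_restrict_iff' measurableSet_Ici).2 (Eventually.of_forall fun _ hs =>
            (norm_shellIntegral_le g (N + 2) hs).trans_eq (div_eq_mul_inv _ _)))
    _ = _ := by rw [integral_const_mul]; ring

theorem exists_clm_eq_setIntegral_shellIntegral (hC : 0 ≤ C)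
    (hpoly : ∀ L : ℝ, 0 ≤ L → ρ (Icc 0 L) ≤ ENNReal.ofReal (C * (1 + L ^ N))) :
    ∃ W : 𝓢(ℝ⁴, ℂ) →L[ℝ] ℂ, ∀ g, W g = ∫ s in Ici 0, shellIntegral g s ∂ρ := by
  refine ⟨mkCLMtoNormedSpace (fun g => ∫ s in Ici 0, shellIntegral g s ∂ρ) (fun g h => ?_)
    (fun a g => ?_) ?_, fun _ => rfl⟩
  · rw [setIntegral_congr_fun measurableSet_Ici fun s hs => shellIntegral_add g h hs]
    exact integral_add (integrableOn_shellIntegral hC hpoly g)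
      (integrableOn_shellIntegral hC hpoly h)
  · simp only [shellIntegral_smul, RingHom.id_apply]
    exact integral_smul a _
  · obtain ⟨c, hc, hbound⟩ := exists_bound_setIntegral_shellIntegral hC hpoly
    exact ⟨_, c, hc, hbound⟩

end KallenLehmann

theorem kallen_lehmann_well_defined_general
    (ρ : Measure ℝ)
    (C : ℝ) (N : ℕ) (hC : 0 ≤ C)
    (hpoly : ∀ L : ℝ, 0 ≤ L → ρ (Icc 0 L) ≤ ENNReal.ofReal (C * (1 + L ^ N))) :
    (∀ f : 𝓢(EuclideanSpace ℝ (Fin 4), ℂ),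
      ContinuousOn (deltaPlusPair f) (Ici 0)) ∧
    (∀ f : 𝓢(EuclideanSpace ℝ (Fin 4), ℂ), ∀ M : ℕ, ∃ CM : ℝ, 0 ≤ CM ∧
      ∀ s ∈ Ici (0 : ℝ), ‖deltaPlusPair f s‖ ≤ CM / (1 + s) ^ M) ∧
    (∀ f : 𝓢(EuclideanSpace ℝ (Fin 4), ℂ),
      IntegrableOn (deltaPlusPair f) (Ici 0) ρ) ∧
    (∃ W : 𝓢(EuclideanSpace ℝ (Fin 4), ℂ) →L[ℝ] ℂ,
      ∀ f, W f = ∫ s in Ici (0 : ℝ), deltaPlusPair f s ∂ρ) := by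
  simp only [deltaPlusPair_eq_shellIntegral]
  obtain ⟨W, hW⟩ := exists_clm_eq_setIntegral_shellIntegral hC hpoly
  refine ⟨fun f => continuousOn_shellIntegral _, fun f M => ⟨_, ?_, fun s hs =>
    norm_shellIntegral_le _ M hs⟩, fun f => integrableOn_shellIntegral hC hpoly _,
    W.comp (fourierTransformCLM ℝ), fun f => hW _⟩
  have := integral_shellWeight_nonneg
  positivity

/-- **Well-definedness of the Källén–Lehmann representation (eq. (12) of the paper).**
For a polynomially bounded positive spectral measure `ρ` on `[0,∞)`:
for every `f ∈ 𝓢(ℝ⁴)` the map `m₀² ↦ Δ₊^{m₀}(f)` is continuous on `[0,∞)` and decays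
faster than any power of `(1+m₀²)`, it is `ρ`-integrable, and
`W₂(f) = ∫₀^∞ dρ(m₀²) Δ₊^{m₀}(f)` defines a tempered distribution on `𝓢(ℝ⁴)`. -/
theorem kallen_lehmann_well_defined
    (ρ : Measure ℝ) (hsupp : ρ (Iio 0) = 0)
    (C : ℝ) (N : ℕ) (hC : 0 ≤ C)
    (hpoly : ∀ L : ℝ, 0 ≤ L → ρ (Icc 0 L) ≤ ENNReal.ofReal (C * (1 + L ^ N))) :
    (∀ f : 𝓢(EuclideanSpace ℝ (Fin 4), ℂ),
      ContinuousOn (deltaPlusPair f) (Ici 0)) ∧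
    (∀ f : 𝓢(EuclideanSpace ℝ (Fin 4), ℂ), ∀ M : ℕ, ∃ CM : ℝ, 0 ≤ CM ∧
      ∀ s ∈ Ici (0 : ℝ), ‖deltaPlusPair f s‖ ≤ CM / (1 + s) ^ M) ∧
    (∀ f : 𝓢(EuclideanSpace ℝ (Fin 4), ℂ),
      IntegrableOn (deltaPlusPair f) (Ici 0) ρ) ∧
    (∃ W : 𝓢(EuclideanSpace ℝ (Fin 4), ℂ) →L[ℝ] ℂ,
      ∀ f, W f = ∫ s in Ici (0 : ℝ), deltaPlusPair f s ∂ρ) :=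
  kallen_lehmann_well_defined_general ρ C N hC hpoly
end
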